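/- arXiv:1306.0883 — 5 statements merged into one kernel-verified Lean document; each statement's English description precedes it below -/
import Mathlib

section
/- Let A, B, C be nonzero integers and let (x₀, y₀, z₀) be an integer solution of A·x² + B·y² + C·z² = 0 with z₀ ≠ 0. Define the polynomials P_x(m,n) = x₀·A·m² + 2·y₀·B·m·n − x₀·B·n², P_y(m,n) = −y₀·A·m² + 2·x₀·A·m·n + y₀·B·n², and P_z(m,n) = z₀·A·m² + z₀·B·n². Then for every integer solution (x, y, z) of A·x² + B·y² + C·z² = 0 there exist coprime integers m, n and coprime integers p, q with q > 0 and q dividing 2·lcm(A,B)·C·z₀², such that q·x = p·P_x(m,n), q·y = p·P_y(m,n), and q·z = p·P_z(m,n). -/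
/-! Every solution `v = (x, y, z)` satisfies `S • v = P(M, N)` for integers `S ≠ 0`, `M`, `N` with
`S ∣ K M²` and `S ∣ K N²`, where `K = 2 lcm(A, B) C z₀²`. Generically one takes `M = x z₀ + x₀ z`,
`N = y z₀ + y₀ z` and `S = 2 z₀² w`, where the polar form `w = A x x₀ + B y y₀ - C z z₀` divides
`A C M²` and `B C N²`; when `w = 0`, `v` is a rational multiple of `(-x₀, -y₀, z₀)`, which is
proportional to `P(B y₀, -A x₀)`. As `P` is homogeneous of degree 2, writing `(M, N) = g (m, n)`
with `m, n` coprime gives `S • v = g² • P(m, n)`, and `S ∣ K g²` because `g²` is an integral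
combination of `M²` and `N²`; reducing the fraction `g² / S` then gives `p / q` with `q ∣ K`. -/

section Reduction

variable {V : Type*} [AddCommGroup V] [IsAddTorsionFree V]

theorem Int.exists_isCoprime_mul_eq (M N : ℤ) :
    ∃ g m n : ℤ, IsCoprime m n ∧ M = g * m ∧ N = g * n := by
  rcases (Int.gcd M N).eq_zero_or_pos with hg | hg
  · obtain ⟨rfl, rfl⟩ := Int.gcd_eq_zero_iff.1 hg
    exact ⟨0, 1, 0, isCoprime_one_left, by simp, by simp⟩
  obtain ⟨m, n, hmn, hM, hN⟩ := Int.exists_gcd_one hg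
  exact ⟨Int.gcd M N, m, n, Int.isCoprime_iff_gcd_eq_one.2 hmn, hM.trans (mul_comm _ _),
    hN.trans (mul_comm _ _)⟩

theorem exists_isCoprime_smul_eq_smul {S T K : ℤ} {v u : V} (hS : S ≠ 0)
    (h : S • v = T • u) (hK : S ∣ K * T) :
    ∃ p q : ℤ, IsCoprime p q ∧ 0 < q ∧ q ∣ K ∧ q • v = p • u := by
  have hd : 0 < Int.gcd T S := Int.gcd_pos_of_ne_zero_right T hS
  obtain ⟨p, q, hgcd, hT, hS'⟩ := Int.exists_gcd_one hd
  have hbez := Int.gcd_eq_gcd_ab T S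
  set d : ℤ := (Int.gcd T S : ℤ)
  have hd0 : d ≠ 0 := by positivity
  have hpq : IsCoprime p q := Int.isCoprime_iff_gcd_eq_one.2 hgcd
  have hq0 : q ≠ 0 := by rintro rfl; simp [hS'] at hS
  have hqv : q • v = p • u := by
    apply zsmul_right_injective hd0
    simp only [smul_smul]
    rw [mul_comm d q, mul_comm d p, ← hS', ← hT, h]
  have hqK : q ∣ K := by
    have hSd : S ∣ K * d := by
      rw [show K * d = Int.gcdA T S * (K * T) + K * Int.gcdB T S * S by
        rw [hbez]; ring]
      exact dvd_add (hK.mul_left _) (dvd_mul_left _ _)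
    rw [hS'] at hSd
    exact (mul_dvd_mul_iff_right hd0).1 hSd
  rcases hq0.lt_or_gt with hneg | hpos
  · exact ⟨-p, -q, hpq.neg_neg, neg_pos.2 hneg, neg_dvd.2 hqK, by simp [hqv]⟩
  · exact ⟨p, q, hpq, hpos, hqK, hqv⟩

theorem exists_isCoprime_smul_eq_smul_of_homogeneous {F : ℤ → ℤ → V}
    (hF : ∀ g m n, F (g * m) (g * n) = g ^ 2 • F m n) {S M N K : ℤ} {v : V} (hS : S ≠ 0)
    (h : S • v = F M N) (hM : S ∣ K * M ^ 2) (hN : S ∣ K * N ^ 2) :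
    ∃ m n p q : ℤ, IsCoprime m n ∧ IsCoprime p q ∧ 0 < q ∧ q ∣ K ∧ q • v = p • F m n := by
  obtain ⟨g, m, n, hmn, rfl, rfl⟩ := Int.exists_isCoprime_mul_eq M N
  obtain ⟨a, b, hab⟩ := hmn.pow (m := 2) (n := 2)
  have hK : S ∣ K * g ^ 2 := by
    rw [show K * g ^ 2 = a * (K * (g * m) ^ 2) + b * (K * (g * n) ^ 2) by
      linear_combination -K * g ^ 2 * hab]
    exact dvd_add (hM.mul_left a) (hN.mul_left b)
  rw [hF] at h
  obtain ⟨p, q, hpq, hq, hqK, hqv⟩ := exists_isCoprime_smul_eq_smul hS h hK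
  exact ⟨m, n, p, q, hmn, hpq, hq, hqK, hqv⟩

end Reduction

def conicParam (A B x₀ y₀ z₀ m n : ℤ) : ℤ × ℤ × ℤ :=
  (x₀ * A * m ^ 2 + 2 * y₀ * B * m * n - x₀ * B * n ^ 2,
    -y₀ * A * m ^ 2 + 2 * x₀ * A * m * n + y₀ * B * n ^ 2,
    z₀ * A * m ^ 2 + z₀ * B * n ^ 2)

section Conic

variable {A B C x₀ y₀ z₀ x y z : ℤ}

theorem conicParam_mul (A B x₀ y₀ z₀ g m n : ℤ) :
    conicParam A B x₀ y₀ z₀ (g * m) (g * n) = g ^ 2 • conicParam A B x₀ y₀ z₀ m n := by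
  simp only [conicParam, Prod.smul_mk, smul_eq_mul, Prod.mk.injEq]
  refine ⟨?_, ?_, ?_⟩ <;> ring

theorem smul_eq_conicParam (h₀ : A * x₀ ^ 2 + B * y₀ ^ 2 + C * z₀ ^ 2 = 0)
    (h : A * x ^ 2 + B * y ^ 2 + C * z ^ 2 = 0) :
    (2 * z₀ ^ 2 * (A * x * x₀ + B * y * y₀ - C * z * z₀)) • (x, y, z) =
      conicParam A B x₀ y₀ z₀ (x * z₀ + x₀ * z) (y * z₀ + y₀ * z) := by
  simp only [conicParam, Prod.smul_mk, smul_eq_mul, Prod.mk.injEq]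
  refine ⟨?_, ?_, ?_⟩
  · linear_combination (x₀ * z₀ ^ 2) * h - (2 * x * z * z₀ + x₀ * z ^ 2) * h₀
  · linear_combination (y₀ * z₀ ^ 2) * h - (2 * y * z * z₀ + y₀ * z ^ 2) * h₀
  · linear_combination (-(z₀ ^ 3)) * h - (z₀ * z ^ 2) * h₀

theorem polar_dvd_mul_sq (h₀ : A * x₀ ^ 2 + B * y₀ ^ 2 + C * z₀ ^ 2 = 0)
    (h : A * x ^ 2 + B * y ^ 2 + C * z ^ 2 = 0) :
    A * x * x₀ + B * y * y₀ - C * z * z₀ ∣ A * C * (x * z₀ + x₀ * z) ^ 2 ∧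
      A * x * x₀ + B * y * y₀ - C * z * z₀ ∣ B * C * (y * z₀ + y₀ * z) ^ 2 :=
  ⟨⟨-A * x * x₀ + B * y * y₀ + C * z * z₀, by
      linear_combination (A * x₀ ^ 2 + C * z₀ ^ 2) * h - (B * y ^ 2) * h₀⟩,
    ⟨A * x * x₀ - B * y * y₀ + C * z * z₀, by
      linear_combination (B * y₀ ^ 2 + C * z₀ ^ 2) * h - (A * x ^ 2) * h₀⟩⟩

theorem exists_smul_eq_conicParam_of_polar_ne_zero
    (h₀ : A * x₀ ^ 2 + B * y₀ ^ 2 + C * z₀ ^ 2 = 0) (h : A * x ^ 2 + B * y ^ 2 + C * z ^ 2 = 0)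
    (hz₀ : z₀ ≠ 0) (hw : A * x * x₀ + B * y * y₀ - C * z * z₀ ≠ 0) :
    ∃ S M N : ℤ, S ≠ 0 ∧ S • (x, y, z) = conicParam A B x₀ y₀ z₀ M N ∧
      S ∣ 2 * lcm A B * C * z₀ ^ 2 * M ^ 2 ∧ S ∣ 2 * lcm A B * C * z₀ ^ 2 * N ^ 2 := by
  obtain ⟨hM, hN⟩ := polar_dvd_mul_sq h₀ h
  obtain ⟨kA, hkA⟩ := dvd_lcm_left A B
  obtain ⟨kB, hkB⟩ := dvd_lcm_right A B
  refine ⟨_, _, _, by positivity, smul_eq_conicParam h₀ h, ?_, ?_⟩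
  · rw [hkA, show 2 * (A * kA) * C * z₀ ^ 2 * (x * z₀ + x₀ * z) ^ 2 =
      2 * z₀ ^ 2 * (kA * (A * C * (x * z₀ + x₀ * z) ^ 2)) by ring]
    exact mul_dvd_mul_left _ (hM.mul_left kA)
  · rw [hkB, show 2 * (B * kB) * C * z₀ ^ 2 * (y * z₀ + y₀ * z) ^ 2 =
      2 * z₀ ^ 2 * (kB * (B * C * (y * z₀ + y₀ * z) ^ 2)) by ring]
    exact mul_dvd_mul_left _ (hN.mul_left kB)

theorem exists_smul_eq_conicParam_of_polar_eq_zero (hA : A ≠ 0) (hB : B ≠ 0) (hC : C ≠ 0)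
    (h₀ : A * x₀ ^ 2 + B * y₀ ^ 2 + C * z₀ ^ 2 = 0) (h : A * x ^ 2 + B * y ^ 2 + C * z ^ 2 = 0)
    (hz₀ : z₀ ≠ 0) (hw : A * x * x₀ + B * y * y₀ - C * z * z₀ = 0) :
    ∃ S M N : ℤ, S ≠ 0 ∧ S • (x, y, z) = conicParam A B x₀ y₀ z₀ M N ∧
      S ∣ 2 * lcm A B * C * z₀ ^ 2 * M ^ 2 ∧ S ∣ 2 * lcm A B * C * z₀ ^ 2 * N ^ 2 := by
  obtain ⟨hM, hN⟩ := polar_dvd_mul_sq h₀ h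
  rw [hw, zero_dvd_iff] at hM hN
  have hx : x * z₀ + x₀ * z = 0 := by simpa [hA, hC] using hM
  have hy : y * z₀ + y₀ * z = 0 := by simpa [hB, hC] using hN
  by_cases hz : z = 0
  · obtain rfl : x = 0 := by simpa [hz, hz₀] using hx
    obtain rfl : y = 0 := by simpa [hz, hz₀] using hy
    exact ⟨1, 0, 0, one_ne_zero, by simp [hz, conicParam], one_dvd _, one_dvd _⟩
  obtain ⟨kA, hkA⟩ := dvd_lcm_left A B
  obtain ⟨kB, hkB⟩ := dvd_lcm_right A B
  refine ⟨-(A * B * C * z₀ ^ 3 * z), B * y₀ * z, -(A * x₀ * z), by simp [hA, hB, hC, hz₀, hz], ?_,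
    ⟨2 * kA * B * y₀ * y, ?_⟩, ⟨2 * kB * A * x₀ * x, ?_⟩⟩
  · simp only [conicParam, Prod.smul_mk, smul_eq_mul, Prod.mk.injEq]
    refine ⟨?_, ?_, ?_⟩
    · linear_combination (-(A * B * C * z₀ ^ 2 * z)) * hx + (A * B * x₀ * z ^ 2) * h₀
    · linear_combination (-(A * B * C * z₀ ^ 2 * z)) * hy + (A * B * y₀ * z ^ 2) * h₀
    · linear_combination (-(A * B * z₀ * z ^ 2)) * h₀
  · rw [hkA]; linear_combination (2 * A * kA * B ^ 2 * C * z₀ ^ 2 * y₀ * z) * hy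
  · rw [hkB]; linear_combination (2 * B * kB * A ^ 2 * C * z₀ ^ 2 * x₀ * z) * hx

theorem exists_smul_eq_conicParam (hA : A ≠ 0) (hB : B ≠ 0) (hC : C ≠ 0)
    (h₀ : A * x₀ ^ 2 + B * y₀ ^ 2 + C * z₀ ^ 2 = 0) (h : A * x ^ 2 + B * y ^ 2 + C * z ^ 2 = 0)
    (hz₀ : z₀ ≠ 0) :
    ∃ S M N : ℤ, S ≠ 0 ∧ S • (x, y, z) = conicParam A B x₀ y₀ z₀ M N ∧
      S ∣ 2 * lcm A B * C * z₀ ^ 2 * M ^ 2 ∧ S ∣ 2 * lcm A B * C * z₀ ^ 2 * N ^ 2 := by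
  by_cases hw : A * x * x₀ + B * y * y₀ - C * z * z₀ = 0
  · exact exists_smul_eq_conicParam_of_polar_eq_zero hA hB hC h₀ h hz₀ hw
  · exact exists_smul_eq_conicParam_of_polar_ne_zero h₀ h hz₀ hw

end Conic

/-- **Theorem (general solution of A x² + B y² + C z² = 0).**
Given nonzero integers `A, B, C` and a particular solution `(x₀, y₀, z₀)` with `z₀ ≠ 0`,
every integer solution `(x, y, z)` is of the form
`(x, y, z) = (p/q) · (P_x(m,n), P_y(m,n), P_z(m,n))`
where `m, n` are coprime, `p, q` are coprime, `q > 0` and `q ∣ 2·lcm(A,B)·C·z₀²`. -/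
theorem stmt0 (A B C x₀ y₀ z₀ : ℤ) (hA : A ≠ 0) (hB : B ≠ 0) (hC : C ≠ 0)
    (hz₀ : z₀ ≠ 0) (h₀ : A * x₀ ^ 2 + B * y₀ ^ 2 + C * z₀ ^ 2 = 0)
    (x y z : ℤ) (h : A * x ^ 2 + B * y ^ 2 + C * z ^ 2 = 0) :
    ∃ m n p q : ℤ, IsCoprime m n ∧ IsCoprime p q ∧ 0 < q ∧
      q ∣ 2 * lcm A B * C * z₀ ^ 2 ∧
      q * x = p * (x₀ * A * m ^ 2 + 2 * y₀ * B * m * n - x₀ * B * n ^ 2) ∧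
      q * y = p * (-y₀ * A * m ^ 2 + 2 * x₀ * A * m * n + y₀ * B * n ^ 2) ∧
      q * z = p * (z₀ * A * m ^ 2 + z₀ * B * n ^ 2) := by
  obtain ⟨S, M, N, hS, hSv, hM, hN⟩ := exists_smul_eq_conicParam hA hB hC h₀ h hz₀
  obtain ⟨m, n, p, q, hmn, hpq, hq, hqK, hqv⟩ :=
    exists_isCoprime_smul_eq_smul_of_homogeneous (conicParam_mul A B x₀ y₀ z₀) hS hSv hM hN
  simp only [conicParam, Prod.smul_mk, smul_eq_mul, Prod.mk.injEq] at hqv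
  exact ⟨m, n, p, q, hmn, hpq, hq, hqK, hqv.1, hqv.2.1, hqv.2.2⟩
end

section
/- Let P₁(x,y) = a₁x² + b₁xy + c₁y² and P₂(x,y) = a₂x² + b₂xy + c₂y² be homogeneous quadratic polynomials with integer coefficients whose resultant R (the determinant of the 4×4 Sylvester matrix with columns [a₁,b₁,c₁,0], [0,a₁,b₁,c₁], [a₂,b₂,c₂,0], [0,a₂,b₂,c₂]) is nonzero. Let d₃ be the greatest common divisor of the determinants of all 3×3 submatrices of this Sylvester matrix, and set G = R/d₃. Then for all coprime integers m, n, the integer gcd(P₁(m,n), P₂(m,n)) divides G. -/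
/-!
With `v = (m³, m²n, mn², n³)` the Sylvester matrix `M` gives `v ᵥ* M = (mP₁, nP₁, mP₂, nP₂)`,
so `g = gcd(P₁, P₂)` divides every entry of `v ᵥ* M`. Multiplying by the adjugate, whose
entries are signed 3×3 minors and hence multiples of `d₃`, gives `det M • v = (v ᵥ* M) ᵥ* adj M`,
so `g d₃ ∣ det M · m³` and `g d₃ ∣ det M · n³`. As `m³` and `n³` are coprime, `g d₃ ∣ det M`,
hence `g ∣ det M / d₃` (trivially when `d₃ = 0`, since integer division by zero gives `0`).
-/

open Matrix

theorem Matrix.gcd_det_submatrix_dvd_adjugate_apply {R : Type*} [CommRing R] [IsDomain R]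
    [NormalizedGCDMonoid R] {k : ℕ} (M : Matrix (Fin (k + 1)) (Fin (k + 1)) R)
    (i j : Fin (k + 1)) :
    Finset.univ.gcd (fun p : Fin (k + 1) × Fin (k + 1) =>
      (M.submatrix p.1.succAbove p.2.succAbove).det) ∣ M.adjugate i j := by
  rw [adjugate_fin_succ_eq_det_submatrix]
  exact (Finset.gcd_dvd (Finset.mem_univ (j, i))).mul_left _

theorem Matrix.det_smul_eq_vecMul_vecMul_adjugate {R n : Type*} [CommRing R] [Fintype n]
    [DecidableEq n] (M : Matrix n n R) (v : n → R) :
    M.det • v = (v ᵥ* M) ᵥ* M.adjugate := by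
  rw [vecMul_vecMul, mul_adjugate, vecMul_smul, vecMul_one]

theorem Matrix.mul_dvd_det_mul_of_dvd_vecMul {R n : Type*} [CommRing R] [Fintype n]
    [DecidableEq n] (M : Matrix n n R) (v : n → R) {g d : R}
    (hg : ∀ j, g ∣ (v ᵥ* M) j) (hd : ∀ i j, d ∣ M.adjugate i j) (i : n) :
    g * d ∣ M.det * v i := by
  have h := congrFun (M.det_smul_eq_vecMul_vecMul_adjugate v) i
  rw [Pi.smul_apply, smul_eq_mul] at h
  rw [h]
  exact Finset.dvd_sum fun j _ => mul_dvd_mul (hg j) (hd j i)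

theorem IsCoprime.dvd_of_dvd_mul_of_dvd_mul {R : Type*} [CommRing R] {x y a r : R}
    (hxy : IsCoprime x y) (hx : a ∣ r * x) (hy : a ∣ r * y) : a ∣ r := by
  obtain ⟨s, t, hst⟩ := hxy
  have hr : r = s * (r * x) + t * (r * y) := by linear_combination (-r) * hst
  rw [hr]
  exact dvd_add (hx.mul_left s) (hy.mul_left t)

theorem vecMul_sylvester_quadratic {R : Type*} [CommRing R] (a₁ b₁ c₁ a₂ b₂ c₂ m n : R) :
    ![m ^ 3, m ^ 2 * n, m * n ^ 2, n ^ 3] ᵥ*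
        !![a₁, 0, a₂, 0; b₁, a₁, b₂, a₂; c₁, b₁, c₂, b₂; 0, c₁, 0, c₂] =
      ![m * (a₁ * m ^ 2 + b₁ * m * n + c₁ * n ^ 2), n * (a₁ * m ^ 2 + b₁ * m * n + c₁ * n ^ 2),
        m * (a₂ * m ^ 2 + b₂ * m * n + c₂ * n ^ 2), n * (a₂ * m ^ 2 + b₂ * m * n + c₂ * n ^ 2)] := by
  ext i
  fin_cases i <;> simp [vecMul, dotProduct, Fin.sum_univ_four] <;> ring

theorem stmt1_general (a₁ b₁ c₁ a₂ b₂ c₂ : ℤ)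
    (M : Matrix (Fin 4) (Fin 4) ℤ)
    (hM : M = !![a₁, 0, a₂, 0; b₁, a₁, b₂, a₂; c₁, b₁, c₂, b₂; 0, c₁, 0, c₂])
    (d₃ : ℤ)
    (hd₃ : d₃ = Finset.gcd Finset.univ
      (fun p : Fin 4 × Fin 4 => (M.submatrix p.1.succAbove p.2.succAbove).det))
    (m n : ℤ) (hmn : IsCoprime m n) :
    (Int.gcd (a₁ * m ^ 2 + b₁ * m * n + c₁ * n ^ 2)
             (a₂ * m ^ 2 + b₂ * m * n + c₂ * n ^ 2) : ℤ) ∣ M.det / d₃ := by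
  set P₁ := a₁ * m ^ 2 + b₁ * m * n + c₁ * n ^ 2
  set P₂ := a₂ * m ^ 2 + b₂ * m * n + c₂ * n ^ 2
  have hP₁ := Int.gcd_dvd_left P₁ P₂
  have hP₂ := Int.gcd_dvd_right P₁ P₂
  have hg : ∀ j, (Int.gcd P₁ P₂ : ℤ) ∣ (![m ^ 3, m ^ 2 * n, m * n ^ 2, n ^ 3] ᵥ* M) j := by
    rw [hM, vecMul_sylvester_quadratic]
    simp only [Fin.forall_fin_succ, IsEmpty.forall_iff, and_true, cons_val_zero, cons_val_succ]
    exact ⟨hP₁.mul_left m, hP₁.mul_left n, hP₂.mul_left m, hP₂.mul_left n⟩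
  have hd : ∀ i j, d₃ ∣ M.adjugate i j := by
    subst hd₃
    exact M.gcd_det_submatrix_dvd_adjugate_apply
  have hdvd := M.mul_dvd_det_mul_of_dvd_vecMul _ hg hd
  have hdet : Int.gcd P₁ P₂ * d₃ ∣ M.det :=
    hmn.pow.dvd_of_dvd_mul_of_dvd_mul (hdvd 0) (hdvd 3)
  rw [mul_comm] at hdet
  exact EuclideanDomain.dvd_div_of_mul_dvd hdet

/-- **Theorem (gcd bound via the Sylvester matrix).**
Let `P₁(x,y) = a₁x² + b₁xy + c₁y²` and `P₂(x,y) = a₂x² + b₂xy + c₂y²` have nonzero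
resultant `R` (the determinant of the 4×4 Sylvester matrix).  Let `d₃` be the gcd of
the determinants of all 3×3 submatrices of the Sylvester matrix, and `G = R / d₃`.
Then for all coprime integers `m, n`, `gcd(P₁(m,n), P₂(m,n))` divides `G`. -/
theorem stmt1 (a₁ b₁ c₁ a₂ b₂ c₂ : ℤ)
    (M : Matrix (Fin 4) (Fin 4) ℤ)
    (hM : M = !![a₁, 0, a₂, 0; b₁, a₁, b₂, a₂; c₁, b₁, c₂, b₂; 0, c₁, 0, c₂])
    (hR : M.det ≠ 0)
    (d₃ : ℤ)
    (hd₃ : d₃ = Finset.gcd Finset.univ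
      (fun p : Fin 4 × Fin 4 => (M.submatrix p.1.succAbove p.2.succAbove).det))
    (m n : ℤ) (hmn : IsCoprime m n) :
    (Int.gcd (a₁ * m ^ 2 + b₁ * m * n + c₁ * n ^ 2)
             (a₂ * m ^ 2 + b₂ * m * n + c₂ * n ^ 2) : ℤ) ∣ M.det / d₃ :=
  stmt1_general a₁ b₁ c₁ a₂ b₂ c₂ M hM d₃ hd₃ m n hmn
end

section
/- Let P, Q be integers with P > 0, |Q| = 1, (P,Q) ≠ (3,1), and D = P² − 4Q > 0. If u and v are positive integers such that v² − D·u² = 4 or v² − D·u² = −4, then there exists an integer n ≥ 0 such that u = U_n(P,Q) and v = V_n(P,Q). -/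
/-- The Lucas sequence `U(P,Q)`: `U₀ = 0`, `U₁ = 1`, `U_{n+1} = P·U_n − Q·U_{n−1}`. -/
def lucasU (P Q : ℤ) : ℕ → ℤ
  | 0 => 0
  | 1 => 1
  | n + 2 => P * lucasU P Q (n + 1) - Q * lucasU P Q n

/-- The Lucas sequence `V(P,Q)`: `V₀ = 2`, `V₁ = P`, `V_{n+1} = P·V_n − Q·V_{n−1}`. -/
def lucasV (P Q : ℤ) : ℕ → ℤ
  | 0 => 2
  | 1 => P
  | n + 2 => P * lucasV P Q (n + 1) - Q * lucasV P Q n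

lemma lt_of_sq_lt_sq' {x y : ℤ} (h : x^2 < y^2) (hy : 0 ≤ y) : x < y := by
  nlinarith [sq_nonneg (x + y), sq_nonneg (x - y)]

lemma desc1 (P Q u v : ℤ) (hq : Q = 1) (hP : 4 ≤ P) (hu : 2 ≤ u) (hv : 0 < v)
    (he : v^2 - (P^2-4*Q)*u^2 = 4 ∨ v^2 - (P^2-4*Q)*u^2 = -4) :
    v < P*u ∧ (P-2)*u < v ∧ (P^2-4*Q)*u < P*v := by
  subst hq
  have hu4 : 4 ≤ u^2 := by nlinarith
  have hP16 : 16 ≤ P^2 := by nlinarith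
  have hprod : 0 ≤ (P^2-4)*(u^2-4) := mul_nonneg (by nlinarith) (by nlinarith)
  have hprod2 : 0 ≤ (P-2)*(u^2-4) := mul_nonneg (by linarith) (by linarith)
  refine ⟨lt_of_sq_lt_sq' ?_ (by positivity), lt_of_sq_lt_sq' ?_ hv.le,
    lt_of_sq_lt_sq' ?_ (by positivity)⟩
  · rcases he with he | he <;> nlinarith
  · rcases he with he | he <;> nlinarith
  · rcases he with he | he <;> nlinarith

lemma desc2 (P Q u v : ℤ) (hq : Q = -1) (hP : 1 ≤ P) (hu : 2 ≤ u) (hv : 0 < v)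
    (he : v^2 - (P^2-4*Q)*u^2 = 4 ∨ v^2 - (P^2-4*Q)*u^2 = -4) :
    P*u < v ∧ v < (P+2)*u ∧ P*v < (P^2-4*Q)*u := by
  subst hq
  have hu4 : 4 ≤ u^2 := by nlinarith
  have hprod : 0 ≤ (P^2+4)*(u^2-4) := mul_nonneg (by nlinarith) (by nlinarith)
  have hprod2 : 0 ≤ P*(u^2-4) := mul_nonneg (by linarith) (by linarith)
  refine ⟨lt_of_sq_lt_sq' ?_ hv.le, lt_of_sq_lt_sq' ?_ ?_, lt_of_sq_lt_sq' ?_ ?_⟩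
  · rcases he with he | he <;> nlinarith
  · rcases he with he | he <;> nlinarith
  · exact mul_nonneg (by linarith) (by linarith)
  · rcases he with he | he <;> nlinarith
  · exact mul_nonneg (by nlinarith) (by linarith)

lemma lucas_step (P Q : ℤ) (n : ℕ) :
    2 * lucasU P Q (n+1) = P * lucasU P Q n + lucasV P Q n ∧
    2 * lucasV P Q (n+1) = P * lucasV P Q n + (P^2 - 4*Q) * lucasU P Q n := by
  induction n using Nat.strong_induction_on with
  | _ n ih =>
    match n with
    | 0 => constructor <;> (simp [lucasU, lucasV]; try ring)
    | 1 => constructor <;> (simp [lucasU, lucasV]; try ring)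
    | (k+2) =>
      obtain ⟨h1, h2⟩ := ih (k+1) (by omega)
      obtain ⟨h3, h4⟩ := ih k (by omega)
      constructor
      · show 2 * lucasU P Q ((k+1)+2) = P * lucasU P Q (k+2) + lucasV P Q (k+2)
        simp only [lucasU, lucasV]
        simp only [lucasU, lucasV] at h1 h3
        linear_combination P * h1 - Q * h3
      · show 2 * lucasV P Q ((k+1)+2) = P * lucasV P Q (k+2) + (P^2-4*Q) * lucasU P Q (k+2)
        simp only [lucasU, lucasV]
        simp only [lucasU, lucasV] at h2 h4
        linear_combination P * h2 - Q * h4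

lemma key (P Q : ℤ) (hP : 0 < P) (hQ : Q = 1 ∨ Q = -1) (hPQ : (P, Q) ≠ (3, 1))
    (hD : 0 < P ^ 2 - 4 * Q) :
    ∀ m : ℕ, ∀ u v : ℤ, u ≤ (m : ℤ) → 0 < u → 0 < v →
      (v ^ 2 - (P ^ 2 - 4 * Q) * u ^ 2 = 4 ∨ v ^ 2 - (P ^ 2 - 4 * Q) * u ^ 2 = -4) →
      ∃ n : ℕ, u = lucasU P Q n ∧ v = lucasV P Q n := by
  intro m
  induction m with
  | zero =>
    intro u v h1 h2 _ _
    norm_num at h1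
    omega
  | succ m ih =>
    intro u v hum hu hv h
    have h12 : u = 1 ∨ 2 ≤ u := by omega
    rcases h12 with rfl | hu2
    · -- base case u = 1
      rcases hQ with rfl | rfl <;> rcases h with he | he
      · -- Q = 1, e = 4 : v = P
        have h0 : (v - P) * (v + P) = 0 := by linear_combination he
        rcases mul_eq_zero.mp h0 with h0 | h0
        · exact ⟨1, rfl, show v = P by linarith⟩
        · exfalso; linarith
      · -- Q = 1, e = -4 : impossible
        exfalso
        have hP3 : 3 ≤ P := by nlinarith
        have hPne : P ≠ 3 := fun hp => hPQ (by rw [hp])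
        have hP4 : 4 ≤ P := by omega
        have hv1 : v < P := lt_of_sq_lt_sq' (by nlinarith) hP.le
        have hv2 : P - 2 < v := lt_of_sq_lt_sq' (by nlinarith) hv.le
        have hvp : v = P - 1 := by omega
        subst hvp
        have h9 : 2 * P = 9 := by linear_combination -he
        omega
      · -- Q = -1, e = 4 : P = 1, v = 3, n = 2
        have hv1 : P < v := lt_of_sq_lt_sq' (by nlinarith) hv.le
        have hv2 : v < P + 3 := lt_of_sq_lt_sq' (by nlinarith) (by linarith)
        have hvp : v = P + 1 ∨ v = P + 2 := by omega
        rcases hvp with rfl | rfl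
        · exfalso
          have h7 : 2 * P = 7 := by linear_combination he
          omega
        · have h4 : 4 * P = 4 := by linear_combination he
          have hP1 : P = 1 := by omega
          subst hP1
          exact ⟨2, rfl, rfl⟩
      · -- Q = -1, e = -4 : v = P
        have h0 : (v - P) * (v + P) = 0 := by linear_combination he
        rcases mul_eq_zero.mp h0 with h0 | h0
        · exact ⟨1, rfl, show v = P by linarith⟩
        · exfalso; linarith
    · -- descent case 2 ≤ u
      have he2 : Even (v ^ 2 - (P * u) ^ 2) := by
        rcases h with he | he
        · exact ⟨-2 * Q * u ^ 2 + 2, by linear_combination he⟩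
        · exact ⟨-2 * Q * u ^ 2 - 2, by linear_combination he⟩
      have hev1 : Even (P * u - v) := by
        rw [Int.even_sub] at he2 ⊢
        simp only [Int.even_pow] at he2
        tauto
      have he3 : Even ((P * v) ^ 2 - ((P ^ 2 - 4 * Q) * u) ^ 2) := by
        rcases h with he | he
        · exact ⟨2 * Q * (P ^ 2 - 4 * Q) * u ^ 2 + 2 * P ^ 2, by linear_combination (P^2) * he⟩
        · exact ⟨2 * Q * (P ^ 2 - 4 * Q) * u ^ 2 - 2 * P ^ 2, by linear_combination (P^2) * he⟩
      have hev2 : Even (P * v - (P ^ 2 - 4 * Q) * u) := by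
        rw [Int.even_sub] at he3 ⊢
        simp only [Int.even_pow] at he3
        tauto
      obtain ⟨a, ha⟩ := hev1
      obtain ⟨b, hb⟩ := hev2
      have hnorm : b ^ 2 - (P ^ 2 - 4 * Q) * a ^ 2 = Q * (v ^ 2 - (P ^ 2 - 4 * Q) * u ^ 2) := by
        have h4 : 4 * (b ^ 2 - (P ^ 2 - 4 * Q) * a ^ 2)
            = 4 * (Q * (v ^ 2 - (P ^ 2 - 4 * Q) * u ^ 2)) := by
          linear_combination (P ^ 2 - 4 * Q) * (P * u - v + 2 * a) * ha
            - (P * v - (P ^ 2 - 4 * Q) * u + 2 * b) * hb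
        linarith
      have hPab : P * a + b = 2 * Q * u := by
        have h2 : 2 * (P * a + b) = 4 * Q * u := by linear_combination -P * ha - hb
        linarith
      have hPvb : P * b + (P ^ 2 - 4 * Q) * a = 2 * Q * v := by
        have h2 : 2 * (P * b + (P ^ 2 - 4 * Q) * a) = 4 * Q * v := by
          linear_combination -P * hb - (P ^ 2 - 4 * Q) * ha
        linarith
      rcases hQ with rfl | rfl
      · -- Q = 1
        have hP3 : 3 ≤ P := by nlinarith
        have hPne : P ≠ 3 := fun hp => hPQ (by rw [hp])
        have hP4 : 4 ≤ P := by omega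
        obtain ⟨hv1, hv2, hb1⟩ := desc1 P 1 u v rfl hP4 hu2 hv h
        have ha0 : 0 < a := by linarith
        have hau : a < u := by linarith
        have hb0 : 0 < b := by linarith
        have hnorm' : b ^ 2 - (P ^ 2 - 4 * 1) * a ^ 2 = 4 ∨
            b ^ 2 - (P ^ 2 - 4 * 1) * a ^ 2 = -4 := by
          rcases h with he | he
          · left; rw [hnorm, he]; ring
          · right; rw [hnorm, he]; ring
        obtain ⟨n, hUn, hVn⟩ := ih a b (by push_cast at hum ⊢; linarith) ha0 hb0 hnorm'
        obtain ⟨hs1, hs2⟩ := lucas_step P 1 n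
        rw [← hUn, ← hVn] at hs1 hs2
        exact ⟨n + 1, by linarith, by linarith⟩
      · -- Q = -1
        obtain ⟨hv1, hv2, hb1⟩ := desc2 P (-1) u v rfl (by linarith) hu2 hv h
        have ha0 : 0 < -a := by linarith
        have hau : -a < u := by linarith
        have hb0 : 0 < -b := by linarith
        have hnorm' : (-b) ^ 2 - (P ^ 2 - 4 * (-1)) * (-a) ^ 2 = 4 ∨
            (-b) ^ 2 - (P ^ 2 - 4 * (-1)) * (-a) ^ 2 = -4 := by
          rcases h with he | he
          · right; have h5 := hnorm; rw [he] at h5; linear_combination h5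
          · left; have h5 := hnorm; rw [he] at h5; linear_combination h5
        obtain ⟨n, hUn, hVn⟩ := ih (-a) (-b) (by push_cast at hum ⊢; linarith) ha0 hb0 hnorm'
        obtain ⟨hs1, hs2⟩ := lucas_step P (-1) n
        rw [← hUn, ← hVn] at hs1 hs2
        exact ⟨n + 1, by linarith, by linarith⟩

/-- **Theorem (recognition of Lucas sequence terms).**
Let `P, Q` be integers with `P > 0`, `|Q| = 1`, `(P,Q) ≠ (3,1)`, and `D = P² − 4Q > 0`.
If positive integers `u, v` satisfy `v² − D·u² = ±4`, then `u = U_n(P,Q)` and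
`v = V_n(P,Q)` for some `n ≥ 0`. -/
theorem stmt6 (P Q : ℤ) (hP : 0 < P) (hQ : |Q| = 1) (hPQ : (P, Q) ≠ (3, 1))
    (hD : 0 < P ^ 2 - 4 * Q)
    (u v : ℤ) (hu : 0 < u) (hv : 0 < v)
    (h : v ^ 2 - (P ^ 2 - 4 * Q) * u ^ 2 = 4 ∨ v ^ 2 - (P ^ 2 - 4 * Q) * u ^ 2 = -4) :
    ∃ n : ℕ, u = lucasU P Q n ∧ v = lucasV P Q n := by
  have hQ' : Q = 1 ∨ Q = -1 := (abs_eq (by norm_num : (0:ℤ) ≤ 1)).mp hQ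
  exact key P Q hP hQ' hPQ hD u.toNat u v (by rw [Int.toNat_of_nonneg hu.le]) hu hv h
end

section
/- A Fibonacci number F_n is a perfect square (i.e., F_n = m² for some integer m) if and only if F_n ∈ {0, 1, 144}. -/
/-!
Cohn's argument. Let `L` be the Lucas numbers. Every sequence `u` with
`u (n + 2) = u (n + 1) + u n` satisfies `u (j + 2k) + (-1)^k u j = L k * u (j + k)`, so for even `k`
a shift of the index by `2kt` with `t` odd negates `u` modulo `L k`. When `k` is even and `3 ∤ k`,
`L k ≡ 3 (mod 4)`, so `-c²` is not a square modulo `L k` for `c` prime to `L k`. Writing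
`n = j + 2·3^e·k` with a small, possibly negative, `j` for which `u j` is `c²` or `2c²`, this leaves
only `n = 1` for `F n = y²` with `n` odd, `n = 1, 3` for `L n = y²` and `n = 0, 6` for `L n = 2y²`.
For even indices, `F (2m) = F m * L m` with `gcd (F m) (L m) ∣ 2` reduces `F (2m) = y²` to the two
Lucas equations.
-/

open Nat

def Nat.lucas : ℕ → ℕ
  | 0 => 2
  | 1 => 1
  | n + 2 => lucas (n + 1) + lucas n

def IsFibLike {R : Type*} [Add R] (u : ℕ → R) : Prop :=
  ∀ n, u (n + 2) = u (n + 1) + u n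

namespace Nat

@[simp] theorem lucas_zero : lucas 0 = 2 := rfl
@[simp] theorem lucas_one : lucas 1 = 1 := rfl
theorem lucas_add_two (n : ℕ) : lucas (n + 2) = lucas (n + 1) + lucas n := rfl

theorem isFibLike_fib : IsFibLike fib := fun _ => by rw [fib_add_two, add_comm]
theorem isFibLike_lucas : IsFibLike lucas := lucas_add_two

theorem lucas_add_fib (n : ℕ) : lucas n + fib n = 2 * fib (n + 1) := by
  induction n using Nat.twoStepInduction with
  | zero => rfl
  | one => rfl
  | more n ih₀ ih₁ =>
    rw [lucas_add_two, fib_add_two, fib_add_two (n := n + 1)]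
    omega

theorem fib_two_mul_eq_fib_mul_lucas (n : ℕ) : fib (2 * n) = fib n * lucas n := by
  rw [fib_two_mul, ← lucas_add_fib, Nat.add_sub_cancel]

theorem gcd_fib_lucas_dvd_two (n : ℕ) : gcd (fib n) (lucas n) ∣ 2 := by
  have hcop : Coprime (gcd (fib n) (lucas n)) (fib (n + 1)) :=
    (fib_coprime_fib_succ n).coprime_dvd_left (gcd_dvd_left _ _)
  refine hcop.dvd_of_dvd_mul_right ?_
  rw [← lucas_add_fib]
  exact dvd_add (gcd_dvd_right _ _) (gcd_dvd_left _ _)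

theorem exists_eq_two_mul_mul_odd {d m : ℕ} (hd : d ≠ 0) (hm : ¬ 3 ∣ m) (h : 2 * m ∣ d) :
    ∃ k t, d = 2 * k * t ∧ m ∣ k ∧ ¬ 3 ∣ k ∧ Odd t := by
  obtain ⟨e, r, hr, rfl⟩ := exists_eq_pow_mul_and_not_dvd hd 3 (by norm_num)
  have hcop : Coprime (2 * m) (3 ^ e) :=
    Coprime.pow_right e (((Nat.Prime.coprime_iff_not_dvd prime_three).mpr (by omega)).symm)
  obtain ⟨k, rfl⟩ := hcop.dvd_of_dvd_mul_left h
  refine ⟨m * k, 3 ^ e, by ring, dvd_mul_right m k, fun h3 => hr ?_, Odd.pow (by decide)⟩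
  rw [mul_assoc]
  exact dvd_mul_of_dvd_right h3 2

theorem exists_eq_sq_or_eq_two_mul_sq_of_mul_eq_sq {a b y : ℕ} (hab : gcd a b ∣ 2)
    (h : a * b = y ^ 2) : ∃ c, b = c ^ 2 ∨ b = 2 * c ^ 2 := by
  obtain ⟨g, a', b', hg, hco, rfl, rfl⟩ := exists_coprime' (pos_of_dvd_of_pos hab two_pos)
  rw [gcd_mul_right, hco.gcd_eq_one, one_mul] at hab
  obtain ⟨z, rfl⟩ : g ∣ y := (Nat.pow_dvd_pow_iff two_ne_zero).mp ⟨a' * b', by rw [← h]; ring⟩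
  have hz : b' * a' = z ^ 2 :=
    Nat.eq_of_mul_eq_mul_left (pow_pos hg 2) (by linear_combination h)
  obtain ⟨c, rfl⟩ :=
    exists_eq_pow_of_mul_eq_pow (by rw [gcd_eq_nat_gcd, hco.symm]; exact isUnit_one) hz
  rcases (Nat.dvd_prime prime_two).mp hab with rfl | rfl
  · exact ⟨c, Or.inl (mul_one _)⟩
  · exact ⟨c, Or.inr (mul_comm _ _)⟩

end Nat

namespace IsFibLike

variable {R : Type*}

theorem natCast [AddMonoidWithOne R] {u : ℕ → ℕ} (hu : IsFibLike u) :
    IsFibLike (fun n => (u n : R)) := fun n => by simp only [hu n, Nat.cast_add]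

theorem add_two_mul [CommRing R] {u : ℕ → R} (hu : IsFibLike u) (k j : ℕ) :
    u (j + 2 * k) + (-1) ^ k * u j = lucas k * u (j + k) := by
  induction k using Nat.twoStepInduction generalizing j with
  | zero =>
    simp only [mul_zero, add_zero, pow_zero, one_mul, lucas_zero, cast_ofNat]
    ring
  | one => simp [hu j]
  | more k ih₀ ih₁ =>
    have h₀ := ih₀ (j + 2)
    have h₁ := ih₁ (j + 1)
    have h₂ := hu (j + 2 * k + 2)
    have h₃ := hu j
    push_cast [lucas_add_two]
    ring_nf at *
    linear_combination h₀ + h₁ + h₂ - (-1) ^ k * h₃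

theorem neg_one_pow_mul_eq [CommRing R] {u : ℕ → R} (hu : IsFibLike u) (i n : ℕ) :
    (-1) ^ i * u n = fib (i + 1) * u (n + i) - fib i * u (n + i + 1) := by
  induction i with
  | zero => simp
  | succ i ih =>
    have h := hu (n + i)
    push_cast [fib_add_two, pow_succ]
    ring_nf at *
    linear_combination -ih + (fib (1 + i) : R) * h

theorem modEq_mod {u : ℕ → ℕ} (hu : IsFibLike u) {p N : ℕ} (h₀ : u p ≡ u 0 [MOD N])
    (h₁ : u (p + 1) ≡ u 1 [MOD N]) (n : ℕ) : u n ≡ u (n % p) [MOD N] := by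
  have hshift : ∀ n, u (n + p) ≡ u n [MOD N] := by
    intro n
    induction n using Nat.twoStepInduction with
    | zero => rwa [zero_add]
    | one => rwa [add_comm]
    | more n ih₀ ih₁ =>
      rw [show n + 2 + p = n + p + 2 by ring, hu, hu, show n + p + 1 = n + 1 + p by ring]
      exact ih₁.add ih₀
  have hiter : ∀ q r, u (r + p * q) ≡ u r [MOD N] := by
    intro q r
    induction q with
    | zero => rfl
    | succ q ih => rw [mul_add_one, ← add_assoc]; exact (hshift _).trans ih
  simpa only [Nat.mod_add_div] using hiter (n / p) (n % p)

theorem add_two_mul_modEq_neg {u : ℕ → ℤ} (hu : IsFibLike u) {k : ℕ} (hk : Even k) (j : ℕ) :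
    u (j + 2 * k) ≡ -u j [ZMOD lucas k] := by
  have h := hu.add_two_mul k j
  rw [hk.neg_one_pow, one_mul] at h
  exact Int.modEq_iff_dvd.mpr ⟨-u (j + k), by linear_combination -h⟩

theorem add_two_mul_mul_modEq {u : ℕ → ℤ} (hu : IsFibLike u) {k : ℕ} (hk : Even k) (t j : ℕ) :
    u (j + 2 * k * t) ≡ (-1) ^ t * u j [ZMOD lucas k] := by
  induction t with
  | zero => simp
  | succ t ih =>
    calc u (j + 2 * k * (t + 1)) = u (j + 2 * k * t + 2 * k) := by ring_nf
      _ ≡ -u (j + 2 * k * t) [ZMOD lucas k] := hu.add_two_mul_modEq_neg hk _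
      _ ≡ -((-1) ^ t * u j) [ZMOD lucas k] := ih.neg
      _ = (-1) ^ (t + 1) * u j := by ring

theorem exists_modEq_neg {u : ℕ → ℤ} (hu : IsFibLike u) {m d : ℕ} (hm : Even m) (hm3 : ¬ 3 ∣ m)
    (hd : d ≠ 0) (h : 2 * m ∣ d) :
    ∃ k, m ∣ k ∧ ¬ 3 ∣ k ∧ ∀ j, u (j + d) ≡ -u j [ZMOD lucas k] := by
  obtain ⟨k, t, rfl, hmk, hk3, ht⟩ := Nat.exists_eq_two_mul_mul_odd hd hm3 h
  refine ⟨k, hmk, hk3, fun j => ?_⟩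
  simpa only [ht.neg_one_pow, neg_one_mul] using
    hu.add_two_mul_mul_modEq (even_iff_two_dvd.mpr (hm.two_dvd.trans hmk)) t j

/-- `(-1) ^ i * (fib (i + 1) * u 0 - fib i * u 1)` is `u (-i)` for `u` continued to negative
indices, so this says `u n ≡ -u (-i)`. -/
theorem modEq_of_add_eq {u : ℕ → ℤ} (hu : IsFibLike u) {N : ℤ} {d : ℕ}
    (h : ∀ j, u (j + d) ≡ -u j [ZMOD N]) {n i : ℕ} (hni : n + i = d) :
    (-1) ^ i * u n ≡ fib i * u 1 - fib (i + 1) * u 0 [ZMOD N] := by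
  rw [hu.neg_one_pow_mul_eq, hni]
  have h₀ := h 0
  have h₁ := h 1
  rw [zero_add] at h₀
  rw [add_comm] at h₁
  calc _ ≡ fib (i + 1) * -u 0 - fib i * -u 1 [ZMOD N] := (h₀.mul_left _).sub (h₁.mul_left _)
    _ = _ := by ring

end IsFibLike

namespace Nat

theorem lucas_modEq_mod_24 (n : ℕ) : lucas n ≡ lucas (n % 24) [MOD 24] :=
  isFibLike_lucas.modEq_mod (by decide) (by decide) n

theorem lucas_mod_four_eq_three {k : ℕ} (hk : Even k) (hk3 : ¬ 3 ∣ k) : lucas k % 4 = 3 := by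
  have hres : ∀ r < 24, r % 2 = 0 → ¬ 3 ∣ r → lucas r % 4 = 3 := by decide
  have := hres (k % 24) (mod_lt k (by norm_num)) (by rw [even_iff] at hk; omega) (by omega)
  have := lucas_modEq_mod_24 k
  unfold Nat.ModEq at this
  omega

theorem not_three_dvd_lucas {k : ℕ} (hk : 4 ∣ k) : ¬ 3 ∣ lucas k := by
  have hres : ∀ r < 24, 4 ∣ r → lucas r % 3 ≠ 0 := by decide
  have := hres (k % 24) (mod_lt k (by norm_num)) (by omega)
  have := lucas_modEq_mod_24 k
  unfold Nat.ModEq at this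
  omega

theorem sq_mod_four (b : ℕ) : b ^ 2 % 4 = 0 ∨ b ^ 2 % 4 = 1 := by
  rw [Nat.pow_mod]
  have := mod_lt b (show 0 < 4 by norm_num)
  interval_cases b % 4 <;> simp

theorem lucas_ne_sq_of_even {m : ℕ} (hm : Even m) (b : ℕ) : lucas m ≠ b ^ 2 := by
  have hres : ∀ r < 24, r % 2 = 0 → lucas r % 4 = 2 ∨ lucas r % 4 = 3 := by decide
  have := hres (m % 24) (mod_lt m (by norm_num)) (by rw [even_iff] at hm; omega)
  have := lucas_modEq_mod_24 m
  unfold Nat.ModEq at this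
  have := sq_mod_four b
  omega

theorem lucas_ne_two_mul_sq_of_odd {m : ℕ} (hm : Odd m) (b : ℕ) : lucas m ≠ 2 * b ^ 2 := by
  have hres : ∀ r < 24, r % 2 = 1 → lucas r % 8 ≠ 0 ∧ lucas r % 8 ≠ 2 := by decide
  have := hres (m % 24) (mod_lt m (by norm_num)) (by rw [odd_iff] at hm; omega)
  have := lucas_modEq_mod_24 m
  unfold Nat.ModEq at this
  have := sq_mod_four b
  omega

theorem not_sq_modEq_neg_sq {N c : ℕ} (hN : N % 4 = 3) (hc : c.Coprime N) (x : ℤ) :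
    ¬ x ^ 2 ≡ -(c : ℤ) ^ 2 [ZMOD N] := by
  intro h
  have hJ : jacobiSym (-(c : ℤ) ^ 2) N = -1 := by
    rw [neg_eq_neg_one_mul, jacobiSym.mul_left, jacobiSym.at_neg_one (odd_iff.mpr (by omega)),
      ZMod.χ₄_nat_three_mod_four hN, jacobiSym.sq_one' (by simpa using hc), mul_one]
  refine ZMod.nonsquare_of_jacobiSym_eq_neg_one hJ ⟨x, ?_⟩
  rw [← sq]
  exact_mod_cast ((ZMod.intCast_eq_intCast_iff _ _ _).mpr h).symm

theorem eq_one_of_fib_eq_sq_of_odd {n y : ℕ} (hn : Odd n) (h : fib n = y ^ 2) : n = 1 := by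
  by_contra hn1
  have hu : IsFibLike (fun n => (fib n : ℤ)) := isFibLike_fib.natCast
  obtain ⟨k, hk, hk3, hmod⟩ : ∃ k, 2 ∣ k ∧ ¬ 3 ∣ k ∧ (fib n : ℤ) ≡ -1 [ZMOD lucas k] := by
    rcases odd_mod_four_iff.mp (odd_iff.mp hn) with h1 | h3
    · obtain ⟨k, hk, hk3, hmod⟩ :=
        hu.exists_modEq_neg even_two (by norm_num) (d := n - 1) (by omega) (by omega)
      refine ⟨k, hk, hk3, ?_⟩
      simpa [show 1 + (n - 1) = n by omega] using hmod 1
    · obtain ⟨k, hk, hk3, hmod⟩ :=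
        hu.exists_modEq_neg even_two (by norm_num) (d := n + 1) (by omega) (by omega)
      refine ⟨k, hk, hk3, ?_⟩
      simpa using (hu.modEq_of_add_eq hmod (n := n) (i := 1) rfl).neg
  refine not_sq_modEq_neg_sq (lucas_mod_four_eq_three (even_iff_two_dvd.mpr hk) hk3)
    (coprime_one_left _) y ?_
  rw [h] at hmod
  simpa using hmod

theorem eq_one_or_three_of_lucas_eq_sq {m b : ℕ} (h : lucas m = b ^ 2) : m = 1 ∨ m = 3 := by
  rcases even_or_odd m with hm | hm
  · exact absurd h (lucas_ne_sq_of_even hm b)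
  by_contra hm13
  have hu : IsFibLike (fun n => (lucas n : ℤ)) := isFibLike_lucas.natCast
  obtain ⟨j, c, hjc, hc, hjm, hj4⟩ : ∃ j c, lucas j = c ^ 2 ∧ (c = 1 ∨ c = 2) ∧ j < m ∧ 4 ∣ m - j := by
    rcases odd_mod_four_iff.mp (odd_iff.mp hm) with h1 | h3
    · exact ⟨1, 1, rfl, Or.inl rfl, by omega, by omega⟩
    · exact ⟨3, 2, rfl, Or.inr rfl, by omega, by omega⟩
  obtain ⟨k, hk, hk3, hmod⟩ :=
    hu.exists_modEq_neg even_two (by norm_num) (d := m - j) (by omega) hj4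
  have hN := lucas_mod_four_eq_three (even_iff_two_dvd.mpr hk) hk3
  have hcop : c.Coprime (lucas k) := by
    rcases hc with rfl | rfl
    · exact coprime_one_left _
    · exact coprime_two_left.mpr (odd_iff.mpr (by omega))
  refine not_sq_modEq_neg_sq hN hcop b ?_
  have := hmod j
  rw [show j + (m - j) = m by omega, h, hjc] at this
  exact_mod_cast this

theorem eq_zero_or_six_of_lucas_eq_two_mul_sq {m b : ℕ} (h : lucas m = 2 * b ^ 2) :
    m = 0 ∨ m = 6 := by
  rcases even_or_odd m with hm | hm
  swap
  · exact absurd h (lucas_ne_two_mul_sq_of_odd hm b)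
  by_contra hm06
  have hu : IsFibLike (fun n => (lucas n : ℤ)) := isFibLike_lucas.natCast
  obtain ⟨k, c, hk, hk3, hc, hmod⟩ : ∃ (k c : ℕ), Even k ∧ ¬ 3 ∣ k ∧ c.Coprime (lucas k) ∧
      (lucas m : ℤ) ≡ -(2 * c ^ 2) [ZMOD lucas k] := by
    rw [even_iff] at hm
    rcases (by omega : m % 4 = 0 ∨ m % 8 = 6 ∨ m % 8 = 2) with h4 | h6 | h2
    · obtain ⟨k, hk, hk3, hmod⟩ :=
        hu.exists_modEq_neg even_two (by norm_num) (d := m) (by omega) (by omega)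
      exact ⟨k, 1, even_iff_two_dvd.mpr hk, hk3, coprime_one_left _, by simpa using hmod 0⟩
    · obtain ⟨k, hk, hk3, hmod⟩ :=
        hu.exists_modEq_neg (m := 4) (by decide) (by norm_num) (d := m - 6) (by omega) (by omega)
      refine ⟨k, 3, even_iff_two_dvd.mpr (dvd_trans (by norm_num) hk), hk3,
        (Nat.Prime.coprime_iff_not_dvd prime_three).mpr (not_three_dvd_lucas hk), ?_⟩
      have := hmod 6
      rw [show 6 + (m - 6) = m by omega] at this
      exact this.trans (by norm_num [show lucas 6 = 18 from rfl])
    · obtain ⟨k, hk, hk3, hmod⟩ :=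
        hu.exists_modEq_neg (m := 4) (by decide) (by norm_num) (d := m + 6) (by omega) (by omega)
      refine ⟨k, 3, even_iff_two_dvd.mpr (dvd_trans (by norm_num) hk), hk3,
        (Nat.Prime.coprime_iff_not_dvd prime_three).mpr (not_three_dvd_lucas hk), ?_⟩
      have := hu.modEq_of_add_eq hmod (n := m) (i := 6) rfl
      norm_num [show fib 6 = 8 from rfl, show fib 7 = 13 from rfl] at this
      exact this
  have hN := lucas_mod_four_eq_three hk hk3
  have hcop : (2 * c).Coprime (lucas k) :=
    Coprime.mul_left (coprime_two_left.mpr (odd_iff.mpr (by omega))) hc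
  refine not_sq_modEq_neg_sq hN hcop (2 * b) ?_
  calc (2 * b : ℤ) ^ 2 = 2 * (lucas m : ℤ) := by rw [h]; push_cast; ring
    _ ≡ 2 * -(2 * c ^ 2) [ZMOD lucas k] := hmod.mul_left 2
    _ = -((2 * c : ℕ) : ℤ) ^ 2 := by push_cast; ring

theorem eq_of_fib_eq_sq {n y : ℕ} (h : fib n = y ^ 2) : n = 0 ∨ n = 1 ∨ n = 2 ∨ n = 12 := by
  rcases even_or_odd' n with ⟨m, rfl | rfl⟩
  · rw [fib_two_mul_eq_fib_mul_lucas] at h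
    obtain ⟨c, hc | hc⟩ := exists_eq_sq_or_eq_two_mul_sq_of_mul_eq_sq (gcd_fib_lucas_dvd_two m) h
    · rcases eq_one_or_three_of_lucas_eq_sq hc with rfl | rfl
      · simp
      · change 8 = y ^ 2 at h
        have : y < 3 := by nlinarith
        interval_cases y <;> omega
    · rcases eq_zero_or_six_of_lucas_eq_two_mul_sq hc with rfl | rfl <;> simp
  · exact Or.inr (Or.inl (eq_one_of_fib_eq_sq_of_odd (odd_two_mul_add_one m) h))

end Nat

/-- **Theorem.** A Fibonacci number is a perfect square iff it is `0`, `1`, or `144`. -/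
theorem stmt10 (n : ℕ) :
    (∃ m : ℤ, (Nat.fib n : ℤ) = m ^ 2) ↔ Nat.fib n ∈ ({0, 1, 144} : Set ℕ) := by
  simp only [Set.mem_insert_iff, Set.mem_singleton_iff]
  constructor
  · rintro ⟨m, hm⟩
    have h : fib n = m.natAbs ^ 2 := by
      have := congrArg Int.natAbs hm
      rwa [Int.natAbs_pow, Int.natAbs_natCast] at this
    rcases eq_of_fib_eq_sq h with rfl | rfl | rfl | rfl <;> decide
  · rintro (h | h | h) <;> rw [h]
    exacts [⟨0, by norm_num⟩, ⟨1, by norm_num⟩, ⟨12, by norm_num⟩]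
end

section
/- A Fibonacci number F_n is of the form 2m² + 3 for some integer m if and only if F_n ∈ {3, 5, 21}. -/
open Nat



lemma fibPeriod {M : ℕ} (h0 : (Nat.fib 48 : ZMod M) = 0) (h1 : (Nat.fib 49 : ZMod M) = 1)
    (n : ℕ) : ((Nat.fib n : ZMod M)) = (Nat.fib (n % 48) : ZMod M) := by
  have step : ∀ j, (Nat.fib (j + 48) : ZMod M) = (Nat.fib j : ZMod M) := by
    intro j
    match j with
    | 0 => simpa using h0
    | j + 1 =>
      have h := Nat.fib_add j 48
      have e : j + 1 + 48 = j + 48 + 1 := by omega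
      rw [e, h]
      push_cast
      rw [h0, h1]
      ring
  induction n using Nat.strong_induction_on with
  | _ n ih =>
    rcases lt_or_ge n 48 with h | h
    · rw [Nat.mod_eq_of_lt h]
    · have e : n = (n - 48) + 48 := by omega
      rw [e, step, Nat.add_mod_right, ih (n - 48) (by omega)]

lemma coverCase (M : ℕ) [NeZero M] (h0 : (Nat.fib 48 : ZMod M) = 0)
    (h1 : (Nat.fib 49 : ZMod M) = 1) {n : ℕ} {m : ℤ} (c : ℕ)
    (hm : (Nat.fib n : ℤ) = 2 * m ^ 2 + 3) (hc : n % 48 = c)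
    (hno : ∀ x : ZMod M, 2 * x ^ 2 + 3 ≠ (Nat.fib c : ZMod M)) : False := by
  have h := congrArg (fun z : ℤ => (z : ZMod M)) hm
  push_cast at h
  rw [fibPeriod h0 h1, hc] at h
  exact hno m h.symm




def luc : ℕ → ℕ
  | 0 => 2
  | 1 => 1
  | n + 2 => luc n + luc (n + 1)

lemma luc_eq (k : ℕ) : (luc k : ℤ) = 2 * Nat.fib (k + 1) - Nat.fib k := by
  induction k using Nat.twoStepInduction with
  | zero => simp [luc]
  | one => simp [luc]
  | more k ih1 ih2 =>
    have h1 : Nat.fib (k + 2) = Nat.fib k + Nat.fib (k + 1) := Nat.fib_add_two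
    have h2 : Nat.fib (k + 3) = Nat.fib (k + 1) + Nat.fib (k + 2) := Nat.fib_add_two
    rw [show luc (k + 2) = luc k + luc (k + 1) from rfl]
    push_cast [h1, h2]
    push_cast at ih1 ih2
    linarith

lemma cassini (k : ℕ) :
    ((Nat.fib (k + 1) : ℤ)) ^ 2 - Nat.fib (k + 1) * Nat.fib k - (Nat.fib k : ℤ) ^ 2 = (-1) ^ k := by
  induction k with
  | zero => simp
  | succ k ih =>
    have h1 : Nat.fib (k + 2) = Nat.fib k + Nat.fib (k + 1) := Nat.fib_add_two
    push_cast [h1]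
    push_cast at ih
    ring_nf
    ring_nf at ih
    linear_combination -ih

lemma fib_2k (k : ℕ) : (Nat.fib (2 * k) : ℤ) = Nat.fib k * (2 * Nat.fib (k + 1) - Nat.fib k) := by
  have hle : Nat.fib k ≤ 2 * Nat.fib (k + 1) :=
    le_trans Nat.fib_le_fib_succ (by omega)
  rw [Nat.fib_two_mul]
  push_cast [hle]
  ring

lemma key_add (k a : ℕ) :
    (Nat.fib (a + 2 * k) : ℤ) + (-1) ^ k * Nat.fib a = Nat.fib (a + k) * luc k := by
  induction a using Nat.twoStepInduction with
  | zero =>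
    simp only [Nat.zero_add, Nat.fib_zero]
    rw [luc_eq, fib_2k]
    push_cast
    ring
  | one =>
    rw [show 1 + 2 * k = 2 * k + 1 from by ring, Nat.fib_two_mul_add_one,
      show 1 + k = k + 1 from by ring, luc_eq]
    push_cast
    linear_combination -cassini k
  | more a ih1 ih2 =>
    have e1 : Nat.fib (a + 2 + 2 * k) = Nat.fib (a + 2 * k) + Nat.fib (a + 1 + 2 * k) := by
      rw [show a + 2 + 2 * k = (a + 2 * k) + 2 from by ring]
      rw [Nat.fib_add_two, show a + 2 * k + 1 = a + 1 + 2 * k from by ring]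
    have e2 : Nat.fib (a + 2) = Nat.fib a + Nat.fib (a + 1) := Nat.fib_add_two
    have e3 : Nat.fib (a + 2 + k) = Nat.fib (a + k) + Nat.fib (a + 1 + k) := by
      rw [show a + 2 + k = (a + k) + 2 from by ring]
      rw [Nat.fib_add_two, show a + k + 1 = a + 1 + k from by ring]
    push_cast [e1, e2, e3]
    push_cast at ih1 ih2
    linear_combination ih1 + ih2

lemma key_iter (k s a : ℕ) (hk : Even k) :
    ((Nat.fib (a + 2 * k * s) : ℤ)) ≡ (-1) ^ s * Nat.fib a [ZMOD (luc k : ℤ)] := by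
  induction s with
  | zero => simp
  | succ s ih =>
    have h := key_add k (a + 2 * k * s)
    rw [hk.neg_one_pow] at h
    have h1 : (Nat.fib (a + 2 * k * s + 2 * k) : ℤ) ≡ -Nat.fib (a + 2 * k * s)
        [ZMOD (luc k : ℤ)] := by
      rw [Int.modEq_comm, Int.modEq_iff_dvd]
      exact ⟨Nat.fib (a + 2 * k * s + k), by linear_combination h⟩
    calc (Nat.fib (a + 2 * k * (s + 1)) : ℤ)
        = Nat.fib (a + 2 * k * s + 2 * k) := by rw [show a + 2 * k * (s+1) = a + 2*k*s + 2*k from by ring]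
      _ ≡ -Nat.fib (a + 2 * k * s) [ZMOD (luc k : ℤ)] := h1
      _ ≡ -((-1) ^ s * Nat.fib a) [ZMOD (luc k : ℤ)] := ih.neg
      _ = (-1) ^ (s + 1) * Nat.fib a := by ring

lemma luc_sq (k : ℕ) (hk : Even k) : (luc (2 * k) : ℤ) = (luc k : ℤ) ^ 2 - 2 := by
  have hpow : (-1 : ℤ) ^ k = 1 := hk.neg_one_pow
  rw [luc_eq, luc_eq, fib_2k, show 2 * k + 1 = 2 * k + 1 from rfl, Nat.fib_two_mul_add_one]
  push_cast
  linear_combination (-2 : ℤ) * cassini k - 2 * hpow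

lemma luc_mod (e : ℕ) (he : 3 ≤ e) : luc (2 ^ e) % 12 = 11 := by
  induction e with
  | zero => omega
  | succ e ih =>
    rcases Nat.lt_or_ge e 3 with h | h
    · have he2 : e = 2 := by omega
      subst he2
      decide
    · have ih' := ih h
      have hek : Even (2 ^ e) := (Nat.even_pow).mpr ⟨even_two, by omega⟩
      have hsq := luc_sq (2 ^ e) hek
      rw [show 2 * 2 ^ e = 2 ^ (e + 1) from by rw [pow_succ]; ring] at hsq
      set x := luc (2 ^ e) with hx
      set L := luc (2 ^ (e + 1)) with hL
      have hx12 : (x : ℤ) % 12 = 11 := by omega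
      have hsq12 : (x : ℤ) ^ 2 % 12 = 1 := by
        rw [sq, Int.mul_emod, hx12]; norm_num
      set y : ℤ := (x : ℤ) ^ 2 with hy
      omega



lemma jac_neg_one {L : ℕ} (h : L % 12 = 11) : jacobiSym (-1) L = -1 := by
  have hodd : Odd L := Nat.odd_iff.mpr (by omega)
  rw [jacobiSym.at_neg_one hodd, ZMod.χ₄_nat_three_mod_four (by omega)]

lemma jac_three {L : ℕ} (h : L % 12 = 11) : jacobiSym 3 L = 1 := by
  have h1 : jacobiSym (3 : ℕ) L = -jacobiSym (L : ℕ) 3 :=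
    jacobiSym.quadratic_reciprocity_three_mod_four (by norm_num) (by omega)
  have h2 : ((L : ℕ) : ℤ) % (3 : ℕ) = (2 : ℤ) % (3 : ℕ) := by
    push_cast
    omega
  have h3 : jacobiSym (L : ℕ) 3 = jacobiSym 2 3 := jacobiSym.mod_left' h2
  have h4 : jacobiSym 2 3 = -1 := by
    rw [← jacobiSym.legendreSym.to_jacobiSym 3 2]
    decide
  push_cast at h1
  rw [h1, h3, h4]
  norm_num

lemma coprime_four {L : ℕ} (h : L % 12 = 11) : Nat.Coprime 4 L := by
  have := Nat.Coprime.pow_left 2 ((Nat.prime_two.coprime_iff_not_dvd).mpr (by omega : ¬ 2 ∣ L))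
  simpa using this

lemma jac_4 {L : ℕ} (h : L % 12 = 11) : jacobiSym 4 L = 1 := by
  have : ((4 : ℤ)) = (2 : ℤ) ^ 2 := by norm_num
  rw [this]
  refine jacobiSym.sq_one' ?_
  have := (Nat.prime_two.coprime_iff_not_dvd).mpr (by omega : ¬ 2 ∣ L)
  simpa [Int.gcd] using this

lemma jac_16 {L : ℕ} (h : L % 12 = 11) : jacobiSym 16 L = 1 := by
  have : ((16 : ℤ)) = (4 : ℤ) ^ 2 := by norm_num
  rw [this]
  exact jacobiSym.sq_one' (by simpa [Int.gcd] using coprime_four h)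

lemma no_form {L : ℕ} (hL : L % 12 = 11) {c m : ℤ} (hc : c = -6 ∨ c = -8 ∨ c = -24)
    (h : (2 * m ^ 2 : ℤ) ≡ c [ZMOD (L : ℤ)]) : False := by
  have h4 : ((2 * m) ^ 2 : ℤ) ≡ 2 * c [ZMOD (L : ℤ)] := by
    calc ((2 * m) ^ 2 : ℤ) = 2 * (2 * m ^ 2) := by ring
      _ ≡ 2 * c [ZMOD (L : ℤ)] := h.mul_left 2
  have hJ : jacobiSym ((2 * m) ^ 2) L = jacobiSym (2 * c) L := jacobiSym.mod_left' h4
  have hsq : jacobiSym ((2 * m) ^ 2) L = jacobiSym (2 * m) L ^ 2 := jacobiSym.pow_left _ 2 L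
  have hval : jacobiSym (2 * c) L = -1 := by
    rcases hc with rfl | rfl | rfl
    · rw [show (2 * (-6) : ℤ) = (-1) * (3 * 4) from by ring, jacobiSym.mul_left,
        jacobiSym.mul_left, jac_neg_one hL, jac_three hL, jac_4 hL]
      norm_num
    · rw [show (2 * (-8) : ℤ) = (-1) * 16 from by ring, jacobiSym.mul_left,
        jac_neg_one hL, jac_16 hL]
      norm_num
    · rw [show (2 * (-24) : ℤ) = (-1) * (3 * 16) from by ring, jacobiSym.mul_left,
        jacobiSym.mul_left, jac_neg_one hL, jac_three hL, jac_16 hL]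
      norm_num
  rw [hval, hsq] at hJ
  nlinarith [sq_nonneg (jacobiSym (2 * m) L)]

lemma split16 {D : ℕ} (hD : D ≠ 0) (h16 : 16 ∣ D) :
    ∃ e s, 3 ≤ e ∧ Odd s ∧ D = 2 * 2 ^ e * s := by
  set v := D.factorization 2 with hv
  have hv4 : 4 ≤ v := by
    rw [hv]
    exact (Nat.Prime.pow_dvd_iff_le_factorization Nat.prime_two hD).mp (by norm_num; exact h16)
  refine ⟨v - 1, ordCompl[2] D, by omega, ?_, ?_⟩
  · exact Nat.odd_iff.mpr (by
      have := Nat.not_dvd_ordCompl Nat.prime_two hD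
      omega)
  · have h1 : 2 ^ v * ordCompl[2] D = D := Nat.ordProj_mul_ordCompl_eq_self D 2
    rw [show 2 * 2 ^ (v - 1) = 2 ^ v from by
      rw [← _root_.pow_succ']
      congr 1
      omega]
    exact h1.symm

lemma descentR {n : ℕ} {m : ℤ} (r : ℕ) (hr : r = 4 ∨ r = 5 ∨ r = 8)
    (h16 : n % 16 = r) (hne : n ≠ r) (hm : (Nat.fib n : ℤ) = 2 * m ^ 2 + 3) : False := by
  have hrlt : r < 16 := by rcases hr with rfl | rfl | rfl <;> omega
  have hge : r + 16 ≤ n := by omega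
  obtain ⟨e, s, he, hs, hD⟩ := split16 (D := n - r) (by omega) (by omega)
  have hn : n = r + 2 * 2 ^ e * s := by omega
  have hiter := key_iter (2 ^ e) s r ((Nat.even_pow).mpr ⟨even_two, by omega⟩)
  rw [← hn, hs.neg_one_pow] at hiter
  have hmod := luc_mod e he
  have hc : (2 * m ^ 2 : ℤ) ≡ (-(Nat.fib r) - 3) [ZMOD ((luc (2 ^ e) : ℕ) : ℤ)] := by
    calc (2 * m ^ 2 : ℤ) = (Nat.fib n : ℤ) - 3 := by rw [hm]; ring
      _ ≡ (-1 * Nat.fib r) - 3 [ZMOD ((luc (2 ^ e) : ℕ) : ℤ)] := hiter.sub_right 3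
      _ = -(Nat.fib r) - 3 := by ring
  rcases hr with rfl | rfl | rfl
  · exact no_form hmod (Or.inl rfl) (by simpa [show Nat.fib 4 = 3 from rfl] using hc)
  · exact no_form hmod (Or.inr (Or.inl rfl)) (by
      rw [show ((-(Nat.fib 5 : ℤ) - 3)) = -8 from by norm_num [show Nat.fib 5 = 5 from rfl]] at hc
      exact hc)
  · exact no_form hmod (Or.inr (Or.inr rfl)) (by
      rw [show ((-(Nat.fib 8 : ℤ) - 3)) = -24 from by norm_num [show Nat.fib 8 = 21 from rfl]] at hc
      exact hc)

lemma descent11 {n : ℕ} {m : ℤ} (h16 : n % 16 = 11)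
    (hm : (Nat.fib n : ℤ) = 2 * m ^ 2 + 3) : False := by
  obtain ⟨e, s, he, hs, hD⟩ := split16 (D := n + 5) (by omega) (by omega)
  have heven : Even (2 ^ e) := (Nat.even_pow).mpr ⟨even_two, by omega⟩
  have h0 := key_iter (2 ^ e) s 0 heven
  have h1 := key_iter (2 ^ e) s 1 heven
  rw [show (0 : ℕ) + 2 * 2 ^ e * s = n + 5 from by omega, hs.neg_one_pow] at h0
  rw [show (1 : ℕ) + 2 * 2 ^ e * s = n + 6 from by omega, hs.neg_one_pow] at h1
  simp only [Nat.fib_zero, Nat.fib_one] at h0 h1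
  norm_num at h0 h1
  set L : ℕ := luc (2 ^ e) with hLdef
  have hmod := luc_mod e he
  -- linear fib identities
  have e2 : Nat.fib (n + 2) = Nat.fib n + Nat.fib (n + 1) := Nat.fib_add_two
  have e3 : Nat.fib (n + 3) = Nat.fib (n + 1) + Nat.fib (n + 2) := Nat.fib_add_two
  have e4 : Nat.fib (n + 4) = Nat.fib (n + 2) + Nat.fib (n + 3) := Nat.fib_add_two
  have e5 : Nat.fib (n + 5) = Nat.fib (n + 3) + Nat.fib (n + 4) := Nat.fib_add_two
  have e6 : Nat.fib (n + 6) = Nat.fib (n + 4) + Nat.fib (n + 5) := Nat.fib_add_two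
  have f5 : Nat.fib (n + 5) = 5 * Nat.fib (n + 1) + 3 * Nat.fib n := by omega
  have f6 : Nat.fib (n + 6) = 8 * Nat.fib (n + 1) + 5 * Nat.fib n := by omega
  have hF1 : ((Nat.fib (n + 1) : ℤ)) ≡ 3 [ZMOD (L : ℤ)] := by
    calc ((Nat.fib (n + 1) : ℤ)) = 5 * Nat.fib (n + 5) - 3 * Nat.fib (n + 6) := by
          push_cast [f5, f6]; ring
      _ ≡ 5 * 0 - 3 * (-1) [ZMOD (L : ℤ)] := (h0.mul_left 5).sub (h1.mul_left 3)
      _ = 3 := by norm_num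
  have hF0 : ((3 : ℤ) * Nat.fib n) ≡ 3 * (-5) [ZMOD (L : ℤ)] := by
    calc ((3 : ℤ) * Nat.fib n) = Nat.fib (n + 5) - 5 * Nat.fib (n + 1) := by
          push_cast [f5]; ring
      _ ≡ 0 - 5 * 3 [ZMOD (L : ℤ)] := h0.sub (hF1.mul_left 5)
      _ = 3 * (-5) := by norm_num
  have hco : Int.gcd 3 (L : ℤ) = 1 := by
    have : Nat.Coprime 3 L :=
      (Nat.Prime.coprime_iff_not_dvd (by norm_num)).mpr (by omega)
    simpa [Int.gcd] using this
  have hF0' : ((Nat.fib n : ℤ)) ≡ -5 [ZMOD (L : ℤ)] := by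
    have hLpos : (0 : ℤ) < (L : ℤ) := by exact_mod_cast (show 0 < L from by omega)
    have h' := Int.ModEq.cancel_left_div_gcd hLpos hF0
    rw [show Int.gcd ((L : ℕ) : ℤ) 3 = 1 from by rw [Int.gcd_comm]; exact hco] at h'
    simpa using h' 
  have hc : (2 * m ^ 2 : ℤ) ≡ -8 [ZMOD (L : ℤ)] := by
    calc (2 * m ^ 2 : ℤ) = (Nat.fib n : ℤ) - 3 := by rw [hm]; ring
      _ ≡ -5 - 3 [ZMOD (L : ℤ)] := hF0'.sub_right 3
      _ = -8 := by norm_num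
  exact no_form hmod (Or.inr (Or.inl rfl)) hc


/-- **Theorem.** A Fibonacci number is of the form `2m² + 3` iff it is `3`, `5`, or `21`. -/
theorem stmt13 (n : ℕ) :
    (∃ m : ℤ, (Nat.fib n : ℤ) = 2 * m ^ 2 + 3) ↔ Nat.fib n ∈ ({3, 5, 21} : Set ℕ) := by
  constructor
  · rintro ⟨m, hm⟩
    have c7a : (Nat.fib 48 : ZMod 7) = 0 := by decide
    have c7b : (Nat.fib 49 : ZMod 7) = 1 := by decide
    have c8a : (Nat.fib 48 : ZMod 8) = 0 := by decide
    have c8b : (Nat.fib 49 : ZMod 8) = 1 := by decide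
    have c9a : (Nat.fib 48 : ZMod 9) = 0 := by decide
    have c9b : (Nat.fib 49 : ZMod 9) = 1 := by decide
    have c23a : (Nat.fib 48 : ZMod 23) = 0 := by decide
    have c23b : (Nat.fib 49 : ZMod 23) = 1 := by decide
    obtain ⟨r, hrlt, hr⟩ : ∃ r, r < 48 ∧ n % 48 = r := ⟨n % 48, by omega, rfl⟩
    interval_cases r
    · exact (coverCase 8 c8a c8b 0 hm hr (by decide)).elim
    · exact (coverCase 7 c7a c7b 1 hm hr (by decide)).elim
    · exact (coverCase 7 c7a c7b 2 hm hr (by decide)).elim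
    · exact (coverCase 7 c7a c7b 3 hm hr (by decide)).elim
    · rcases eq_or_ne n 4 with hn | hn
      · subst hn
        simp only [Set.mem_insert_iff, Set.mem_singleton_iff]
        exact Or.inl (by decide)
      · exact (descentR 4 (by norm_num) (by omega) hn hm).elim
    · rcases eq_or_ne n 5 with hn | hn
      · subst hn
        simp only [Set.mem_insert_iff, Set.mem_singleton_iff]
        exact Or.inr (Or.inl (by decide))
      · exact (descentR 5 (by norm_num) (by omega) hn hm).elim
    · exact (coverCase 7 c7a c7b 6 hm hr (by decide)).elim
    · exact (coverCase 7 c7a c7b 7 hm hr (by decide)).elim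
    · rcases eq_or_ne n 8 with hn | hn
      · subst hn
        simp only [Set.mem_insert_iff, Set.mem_singleton_iff]
        exact Or.inr (Or.inr (by decide))
      · exact (descentR 8 (by norm_num) (by omega) hn hm).elim
    · exact (coverCase 7 c7a c7b 9 hm hr (by decide)).elim
    · exact (coverCase 7 c7a c7b 10 hm hr (by decide)).elim
    · exact (descent11 (by omega) hm).elim
    · exact (coverCase 8 c8a c8b 12 hm hr (by decide)).elim
    · exact (coverCase 7 c7a c7b 13 hm hr (by decide)).elim
    · exact (coverCase 7 c7a c7b 14 hm hr (by decide)).elim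
    · exact (coverCase 7 c7a c7b 15 hm hr (by decide)).elim
    · exact (coverCase 9 c9a c9b 16 hm hr (by decide)).elim
    · exact (coverCase 7 c7a c7b 17 hm hr (by decide)).elim
    · exact (coverCase 7 c7a c7b 18 hm hr (by decide)).elim
    · exact (coverCase 7 c7a c7b 19 hm hr (by decide)).elim
    · exact (descentR 4 (by norm_num) (by omega) (by omega) hm).elim
    · exact (descentR 5 (by norm_num) (by omega) (by omega) hm).elim
    · exact (coverCase 7 c7a c7b 22 hm hr (by decide)).elim
    · exact (coverCase 7 c7a c7b 23 hm hr (by decide)).elim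
    · exact (descentR 8 (by norm_num) (by omega) (by omega) hm).elim
    · exact (coverCase 7 c7a c7b 25 hm hr (by decide)).elim
    · exact (coverCase 7 c7a c7b 26 hm hr (by decide)).elim
    · exact (descent11 (by omega) hm).elim
    · exact (coverCase 23 c23a c23b 28 hm hr (by decide)).elim
    · exact (coverCase 7 c7a c7b 29 hm hr (by decide)).elim
    · exact (coverCase 7 c7a c7b 30 hm hr (by decide)).elim
    · exact (coverCase 7 c7a c7b 31 hm hr (by decide)).elim
    · exact (coverCase 23 c23a c23b 32 hm hr (by decide)).elim
    · exact (coverCase 7 c7a c7b 33 hm hr (by decide)).elim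
    · exact (coverCase 7 c7a c7b 34 hm hr (by decide)).elim
    · exact (coverCase 7 c7a c7b 35 hm hr (by decide)).elim
    · exact (descentR 4 (by norm_num) (by omega) (by omega) hm).elim
    · exact (descentR 5 (by norm_num) (by omega) (by omega) hm).elim
    · exact (coverCase 7 c7a c7b 38 hm hr (by decide)).elim
    · exact (coverCase 7 c7a c7b 39 hm hr (by decide)).elim
    · exact (descentR 8 (by norm_num) (by omega) (by omega) hm).elim
    · exact (coverCase 7 c7a c7b 41 hm hr (by decide)).elim
    · exact (coverCase 7 c7a c7b 42 hm hr (by decide)).elim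
    · exact (descent11 (by omega) hm).elim
    · exact (coverCase 9 c9a c9b 44 hm hr (by decide)).elim
    · exact (coverCase 7 c7a c7b 45 hm hr (by decide)).elim
    · exact (coverCase 7 c7a c7b 46 hm hr (by decide)).elim
    · exact (coverCase 7 c7a c7b 47 hm hr (by decide)).elim

  · intro h
    simp only [Set.mem_insert_iff, Set.mem_singleton_iff] at h
    rcases h with h | h | h
    · exact ⟨0, by rw [h]; norm_num⟩
    · exact ⟨1, by rw [h]; norm_num⟩
    · exact ⟨3, by rw [h]; norm_num⟩
end
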